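/- arXiv:2401.06618 — 5 statements merged into one kernel-verified Lean document; each statement's English description precedes it below -/
import Mathlib

section
/- For every h ≥ 1 there exists a trace-orthogonal basis of 𝔽_{2^h} over 𝔽₂, i.e. a basis {e₁,…,e_h} with tr(e_i e_j) = δ_{ij} for all i, j. -/
/-!
The trace form `(x, y) ↦ tr(xy)` of `𝔽_{2^h}` over `𝔽₂` is symmetric and nondegenerate, and it is
not alternating: `tr(x²) = tr(x)` by Frobenius invariance of the trace, and the trace is nonzero.
Such a form has an orthonormal basis. Split off a vector `e` with `B(e, e) = 1` and recurse on
`e^⊥`, choosing `e` so that `e^⊥` is again not alternating: if `v^⊥` is alternating for the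
first choice `v`, a hyperbolic pair `x, y` in `v^⊥` gives `e = v + y`, and then
`v + x + y ∈ e^⊥` has `B(v + x + y, v + x + y) = 1`.
-/

/-- The absolute trace map `𝔽_{2^h} → 𝔽₂`. -/
noncomputable def trF (h : ℕ) (x : GaloisField 2 h) : ZMod 2 :=
  Algebra.trace (ZMod 2) (GaloisField 2 h) x

open Module
open LinearMap (BilinForm)

theorem FiniteField.algebraTrace_pow_card (K L : Type*) [Field K] [Fintype K] [Field L]
    [Algebra K L] [Algebra.IsAlgebraic K L] (x : L) :
    Algebra.trace K L (x ^ Fintype.card K) = Algebra.trace K L x :=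
  Algebra.trace_eq_of_algEquiv (FiniteField.frobeniusAlgEquivOfAlgebraic K L) x

namespace LinearMap.BilinForm

section CommRing

variable {R M ι : Type*} [CommRing R] [AddCommGroup M] [Module R M] [DecidableEq ι]

def IsOrthonormal (B : BilinForm R M) (f : ι → M) : Prop :=
  ∀ i j, B (f i) (f j) = if i = j then 1 else 0

theorem IsSymm.isOrthonormal_cons {B : BilinForm R M} (hs : B.IsSymm) {n : ℕ} {e : M}
    {g : Fin n → M}
    (he : B e e = 1) (heg : ∀ i, B e (g i) = 0) (hg : B.IsOrthonormal g) :
    B.IsOrthonormal (Fin.cons e g : Fin (n + 1) → M) := by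
  intro i j
  cases i using Fin.cases <;> cases j using Fin.cases <;>
    simp [he, heg, ← hs.eq e, hg _ _, (Fin.succ_ne_zero _).symm, Fin.succ_ne_zero]

theorem IsOrthonormal.linearIndependent {K V : Type*} [Field K] [AddCommGroup V] [Module K V]
    {B : BilinForm K V} {f : ι → V} (hf : B.IsOrthonormal f) : LinearIndependent K f :=
  linearIndependent_of_iIsOrtho (fun i j hij => by simpa [hij] using hf i j)
    (fun i => by simp [hf i i])

theorem mem_orthogonal_span_singleton_iff {B : BilinForm R M} {e w : M} :
    w ∈ B.orthogonal (Submodule.span R {e}) ↔ B e w = 0 := by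
  refine ⟨fun hw => hw e (Submodule.mem_span_singleton_self e), fun h u hu => ?_⟩
  obtain ⟨c, rfl⟩ := Submodule.mem_span_singleton.mp hu
  simp [h]

end CommRing

variable {V : Type*} [AddCommGroup V] [Module (ZMod 2) V] [FiniteDimensional (ZMod 2) V]
  {B : BilinForm (ZMod 2) V}

theorem finrank_orthogonal_span_singleton (hB : B.Nondegenerate) {e : V} (he : B e e ≠ 0) :
    finrank (ZMod 2) (B.orthogonal (Submodule.span (ZMod 2) {e})) = finrank (ZMod 2) V - 1 := by
  rw [finrank_orthogonal hB, finrank_span_singleton (ne_zero_of_not_isOrtho_self e he)]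

theorem exists_orthogonal_pair_apply_self_eq_one (hs : B.IsSymm) (hB : B.Nondegenerate) {v : V}
    (hv : B v v = 1) (hV : 2 ≤ finrank (ZMod 2) V) :
    ∃ e w, B e e = 1 ∧ B w w = 1 ∧ B e w = 0 := by
  by_cases hW : ∃ w, B w w = 1 ∧ B v w = 0
  · obtain ⟨w, hw, hvw⟩ := hW
    exact ⟨v, w, hv, hw, hvw⟩
  push Not at hW
  have hv0 : B v v ≠ 0 := by simp [hv]
  set W := B.orthogonal (Submodule.span (ZMod 2) {v})
  have hWnd := restrict_nondegenerate_orthogonal_spanSingleton B hB hs.isRefl hv0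
  have orth : ∀ w ∈ W, B v w = 0 := fun w hw => hw v (Submodule.mem_span_singleton_self v)
  have iso : ∀ w ∈ W, B w w = 0 := fun w hw => by
    by_contra h
    exact hW w (Fin.eq_one_of_ne_zero _ h) (orth w hw)
  obtain ⟨x, hx⟩ : ∃ x : W, x ≠ 0 := Module.finrank_pos_iff_exists_ne_zero.mp (by
    rw [finrank_orthogonal_span_singleton hB hv0]; omega)
  obtain ⟨y, hxy⟩ : ∃ y : W, B x y ≠ 0 := by
    by_contra! h
    exact hx (hWnd.1 x h)
  have hxy : B x y = 1 := Fin.eq_one_of_ne_zero _ hxy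
  have hyx : B y x = 1 := hs.eq (y : V) x ▸ hxy
  have hxv : B x v = 0 := hs.eq (x : V) v ▸ orth x x.2
  have hyv : B y v = 0 := hs.eq (y : V) v ▸ orth y y.2
  -- in characteristic 2 the cross terms of `B(v + x + y, v + x + y)` cancel in pairs
  refine ⟨v + y, v + x + y, ?_, ?_, ?_⟩ <;>
    simp only [map_add, LinearMap.add_apply, hv, orth x x.2, orth y y.2, hxv, hyv, hxy, hyx,
      iso x x.2, iso y y.2] <;> decide

theorem exists_isOrthonormal_fin_succ (n : ℕ) :
    ∀ {V : Type*} [AddCommGroup V] [Module (ZMod 2) V] {B : BilinForm (ZMod 2) V},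
      finrank (ZMod 2) V = n + 1 → B.IsSymm → B.Nondegenerate → ∀ v, B v v = 1 →
      ∃ f : Fin (n + 1) → V, B.IsOrthonormal f := by
  induction n with
  | zero =>
    intro V _ _ B _ _ _ v hv
    exact ⟨fun _ => v, fun i j => by simp [Subsingleton.elim (α := Fin 1) i j, hv]⟩
  | succ n ih =>
    intro V _ _ B hV hs hB v hv
    have : FiniteDimensional (ZMod 2) V := .of_finrank_pos (by omega)
    obtain ⟨e, w, he, hw, hew⟩ := exists_orthogonal_pair_apply_self_eq_one hs hB hv (by omega)
    have he0 : B e e ≠ 0 := by simp [he]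
    set W := B.orthogonal (Submodule.span (ZMod 2) {e})
    have hwW : w ∈ W := mem_orthogonal_span_singleton_iff.mpr hew
    obtain ⟨g, hg⟩ := ih (B := B.restrict W)
      (by rw [finrank_orthogonal_span_singleton hB he0, hV]; rfl)
      ⟨fun a b => hs.eq a b⟩ (restrict_nondegenerate_orthogonal_spanSingleton B hB hs.isRefl he0)
      ⟨w, hwW⟩ hw
    exact ⟨Fin.cons e (W.subtype ∘ g),
      hs.isOrthonormal_cons he (fun i => mem_orthogonal_span_singleton_iff.mp (g i).2) hg⟩

theorem exists_basis_isOrthonormal (hs : B.IsSymm) (hB : B.Nondegenerate) {n : ℕ}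
    (hn : finrank (ZMod 2) V = n) (hv : ∃ v, B v v ≠ 0) :
    ∃ b : Basis (Fin n) (ZMod 2) V, B.IsOrthonormal b := by
  obtain ⟨v, hv⟩ := hv
  obtain ⟨m, rfl⟩ : ∃ m, n = m + 1 := Nat.exists_eq_add_one.mpr <|
    hn ▸ Module.finrank_pos_iff_exists_ne_zero.mpr ⟨v, fun h => hv (by simp [h])⟩
  obtain ⟨f, hf⟩ := exists_isOrthonormal_fin_succ m hn hs hB v (Fin.eq_one_of_ne_zero _ hv)
  exact ⟨basisOfLinearIndependentOfCardEqFinrank' f hf.linearIndependent (by simp [hn]),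
    by simpa using hf⟩

end LinearMap.BilinForm

theorem Algebra.traceForm_zmodTwo_apply_self (L : Type*) [Field L] [Algebra (ZMod 2) L]
    [Algebra.IsAlgebraic (ZMod 2) L] (x : L) :
    Algebra.traceForm (ZMod 2) L x x = Algebra.trace (ZMod 2) L x := by
  rw [Algebra.traceForm_apply, ← sq]
  exact FiniteField.algebraTrace_pow_card (ZMod 2) L x

/-- For every `h ≥ 1` there exists a trace-orthogonal basis `{e₁,…,e_h}` of
`𝔽_{2^h}` over `𝔽₂`, i.e. a basis with `tr(eᵢeⱼ) = δᵢⱼ`. -/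
theorem stmt_4 (h : ℕ) (hh : 1 ≤ h) :
    ∃ e : Module.Basis (Fin h) (ZMod 2) (GaloisField 2 h),
      ∀ i j, trF h (e i * e j) = if i = j then 1 else 0 := by
  obtain ⟨x, hx⟩ : ∃ x, Algebra.trace (ZMod 2) (GaloisField 2 h) x ≠ 0 :=
    DFunLike.ne_iff.mp (Algebra.trace_ne_zero (ZMod 2) (GaloisField 2 h))
  exact LinearMap.BilinForm.exists_basis_isOrthonormal (Algebra.traceForm_isSymm (ZMod 2))
    (traceForm_nondegenerate (ZMod 2) (GaloisField 2 h)) (GaloisField.finrank 2 (by omega))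
    ⟨x, by rwa [Algebra.traceForm_zmodTwo_apply_self]⟩
end

section
/- Let {e₁,…,e_h} be a trace-orthogonal basis of 𝔽_{2^h} over 𝔽₂ and let φ : 𝔽_{2^h}^{2n} → 𝔽₂^{2hn} be the coordinate map that replaces each entry Σⱼ x_j e_j by the tuple (x₁,…,x_h). Then φ preserves the trace-symplectic inner product: ⟨φ(a|b), φ(a'|b')⟩_s = ⟨(a|b),(a'|b')⟩_s for all (a|b), (a'|b') ∈ 𝔽_{2^h}^{2n}. -/
theorem Algebra.trace_mul_eq_sum_repr_mul_repr {K L ι : Type*} [CommRing K] [CommRing L]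
    [Algebra K L] [Fintype ι] [DecidableEq ι] (e : Module.Basis ι K L)
    (he : ∀ i j, Algebra.trace K L (e i * e j) = if i = j then 1 else 0) (x y : L) :
    Algebra.trace K L (x * y) = ∑ j, e.repr x j * e.repr y j := by
  conv_lhs => rw [← e.sum_repr x, ← e.sum_repr y, Finset.sum_mul_sum]
  simp [he, mul_comm]

theorem stmt_5_general (h n : ℕ)
    (e : Module.Basis (Fin h) (ZMod 2) (GaloisField 2 h))
    (he : ∀ i j, trF h (e i * e j) = if i = j then 1 else 0)
    (a b a' b' : Fin n → GaloisField 2 h) :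
    ∑ i, trF h (a i * b' i + a' i * b i) =
      ∑ i, ∑ j, (e.repr (a i) j * e.repr (b' i) j + e.repr (a' i) j * e.repr (b i) j) := by
  refine Finset.sum_congr rfl fun i _ => ?_
  rw [trF, map_add, Algebra.trace_mul_eq_sum_repr_mul_repr e he,
    Algebra.trace_mul_eq_sum_repr_mul_repr e he, Finset.sum_add_distrib]

/-- The coordinate map `φ` induced by a trace-orthogonal basis preserves the
trace-symplectic inner product: for `(a|b), (a'|b') ∈ 𝔽_{2^h}^{2n}` the
trace-symplectic inner product equals the binary symplectic inner product of
the coordinate vectors. -/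
theorem stmt_5 (h n : ℕ) (hh : 1 ≤ h)
    (e : Module.Basis (Fin h) (ZMod 2) (GaloisField 2 h))
    (he : ∀ i j, trF h (e i * e j) = if i = j then 1 else 0)
    (a b a' b' : Fin n → GaloisField 2 h) :
    ∑ i, trF h (a i * b' i + a' i * b i) =
      ∑ i, ∑ j, (e.repr (a i) j * e.repr (b' i) j + e.repr (a' i) j * e.repr (b i) j) :=
  stmt_5_general h n e he a b a' b'
end

section
/- Let {e₁,…,e_h} be a trace-orthogonal basis of 𝔽_{2^h} over 𝔽₂ and φ : 𝔽_{2^h}^{2n} → 𝔽₂^{2hn} the induced coordinate map. Then φ induces a bijection between additive codes C ⊆ 𝔽_{2^h}^{2n} with C ⊆ C^{⊥s} (symplectic self-orthogonal with respect to the trace-symplectic form) of size 2^{h(n-k)}, and additive codes C' ⊆ 𝔽₂^{2hn} with C' ⊆ C'^{⊥s} of size 2^{h(n-k)}. -/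
noncomputable instance (h : ℕ) : Fintype (GaloisField 2 h) := Fintype.ofFinite _

/-- The trace-symplectic inner product on `𝔽_{2^h}^{2n}` (a pair `(a|b)`). -/
noncomputable def trSymp (h n : ℕ)
    (v w : (Fin n → GaloisField 2 h) × (Fin n → GaloisField 2 h)) : ZMod 2 :=
  ∑ i, trF h (v.1 i * w.2 i + w.1 i * v.2 i)

/-- The binary symplectic inner product on `𝔽₂^{2hn}`, with coordinates grouped as
`n` blocks of `h`. -/
def binSymp (h n : ℕ)
    (v w : (Fin n → Fin h → ZMod 2) × (Fin n → Fin h → ZMod 2)) : ZMod 2 :=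
  ∑ i, ∑ j, (v.1 i j * w.2 i j + w.1 i j * v.2 i j)

/-- The coordinate map `φ : 𝔽_{2^h}^{2n} → 𝔽₂^{2hn}` induced by a basis
`{e₁,…,e_h}` of `𝔽_{2^h}` over `𝔽₂`. -/
noncomputable def phi (h n : ℕ) (e : Module.Basis (Fin h) (ZMod 2) (GaloisField 2 h)) :
    ((Fin n → GaloisField 2 h) × (Fin n → GaloisField 2 h)) ≃ₗ[ZMod 2]
      ((Fin n → Fin h → ZMod 2) × (Fin n → Fin h → ZMod 2)) :=
  LinearEquiv.prodCongr
    (LinearEquiv.piCongrRight fun _ => e.equivFun)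
    (LinearEquiv.piCongrRight fun _ => e.equivFun)

/-! In coordinates with respect to a trace-orthogonal basis, `tr (x * y)` is the dot product of
the coordinate vectors, so `φ` carries the trace-symplectic form to the binary symplectic form.
A linear isomorphism maps submodules bijectively onto submodules, preserving cardinality and,
being an isometry, self-orthogonality. -/

theorem LinearMap.BilinForm.apply_eq_sum_repr_mul_of_orthonormal
    {R M ι : Type*} [CommSemiring R] [AddCommMonoid M] [Module R M] [Fintype ι] [DecidableEq ι]
    (B : LinearMap.BilinForm R M) (b : Module.Basis ι R M)
    (hb : ∀ i j, B (b i) (b j) = if i = j then 1 else 0) (x y : M) :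
    B x y = ∑ i, b.repr x i * b.repr y i := by
  conv_lhs => rw [← b.sum_repr x, ← b.sum_repr y]
  simp only [map_sum, map_smul, LinearMap.sum_apply, LinearMap.smul_apply, hb, smul_eq_mul,
    mul_ite, mul_one, mul_zero, Finset.sum_ite_eq', Finset.mem_univ, if_true]
  exact Finset.sum_congr rfl fun i _ => mul_comm _ _

theorem Submodule.isotropic_map_equiv_iff {R M N S : Type*} [Semiring R] [AddCommMonoid M]
    [Module R M] [AddCommMonoid N] [Module R N] [Zero S] (f : M ≃ₗ[R] N)
    {B : M → M → S} {B' : N → N → S} (hB : ∀ v w, B' (f v) (f w) = B v w) (C : Submodule R M) :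
    (∀ v ∈ C.map f.toLinearMap, ∀ w ∈ C.map f.toLinearMap, B' v w = 0) ↔
      ∀ v ∈ C, ∀ w ∈ C, B v w = 0 := by
  simp only [Submodule.mem_map, LinearEquiv.coe_coe, forall_exists_index, and_imp,
    forall_apply_eq_imp_iff₂, hB]

theorem Submodule.card_map_equiv {R M N : Type*} [Semiring R] [AddCommMonoid M]
    [Module R M] [AddCommMonoid N] [Module R N] (f : M ≃ₗ[R] N) (C : Submodule R M) :
    Nat.card (C.map f.toLinearMap) = Nat.card C :=
  (Nat.card_congr (f.submoduleMap C).toEquiv).symm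

theorem LinearEquiv.bijOn_map_isotropic_card_eq {R M N S : Type*} [Semiring R] [AddCommMonoid M]
    [Module R M] [AddCommMonoid N] [Module R N] [Zero S] (f : M ≃ₗ[R] N)
    {B : M → M → S} {B' : N → N → S} (hB : ∀ v w, B' (f v) (f w) = B v w) (m : ℕ) :
    Set.BijOn (fun C : Submodule R M => C.map f.toLinearMap)
      {C | (∀ v ∈ C, ∀ w ∈ C, B v w = 0) ∧ Nat.card C = m}
      {C' | (∀ v ∈ C', ∀ w ∈ C', B' v w = 0) ∧ Nat.card C' = m} :=
  (Submodule.orderIsoMapComap f).toEquiv.bijOn fun C =>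
    and_congr (Submodule.isotropic_map_equiv_iff f hB C)
      (Iff.of_eq (congrArg (· = m) (Submodule.card_map_equiv f C)))

theorem trF_mul_eq_sum_repr_mul {h : ℕ} (e : Module.Basis (Fin h) (ZMod 2) (GaloisField 2 h))
    (he : ∀ i j, trF h (e i * e j) = if i = j then 1 else 0) (x y : GaloisField 2 h) :
    trF h (x * y) = ∑ j, e.repr x j * e.repr y j :=
  (Algebra.traceForm (ZMod 2) (GaloisField 2 h)).apply_eq_sum_repr_mul_of_orthonormal e he x y

theorem binSymp_phi {h n : ℕ} (e : Module.Basis (Fin h) (ZMod 2) (GaloisField 2 h))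
    (he : ∀ i j, trF h (e i * e j) = if i = j then 1 else 0)
    (v w : (Fin n → GaloisField 2 h) × (Fin n → GaloisField 2 h)) :
    binSymp h n (phi h n e v) (phi h n e w) = trSymp h n v w := by
  refine Finset.sum_congr rfl fun i _ => ?_
  rw [trF, map_add, ← trF, ← trF, trF_mul_eq_sum_repr_mul e he,
    trF_mul_eq_sum_repr_mul e he, ← Finset.sum_add_distrib]
  rfl

theorem stmt_6_general (h n k : ℕ)
    (e : Module.Basis (Fin h) (ZMod 2) (GaloisField 2 h))
    (he : ∀ i j, trF h (e i * e j) = if i = j then 1 else 0) :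
    Set.BijOn
      (fun C : Submodule (ZMod 2) ((Fin n → GaloisField 2 h) × (Fin n → GaloisField 2 h)) =>
        Submodule.map (phi h n e).toLinearMap C)
      {C | (∀ v ∈ C, ∀ w ∈ C, trSymp h n v w = 0) ∧ Nat.card C = 2 ^ (h * (n - k))}
      {C' | (∀ v ∈ C', ∀ w ∈ C', binSymp h n v w = 0) ∧ Nat.card C' = 2 ^ (h * (n - k))} :=
  (phi h n e).bijOn_map_isotropic_card_eq (binSymp_phi e he) _

/-- `φ` induces a bijection between trace-symplectic self-orthogonal additive codes
`C ⊆ 𝔽_{2^h}^{2n}` of size `2^{h(n-k)}` and binary symplectic self-orthogonal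
additive codes `C' ⊆ 𝔽₂^{2hn}` of size `2^{h(n-k)}`. -/
theorem stmt_6 (h n k : ℕ) (hh : 1 ≤ h) (hk : k ≤ n)
    (e : Module.Basis (Fin h) (ZMod 2) (GaloisField 2 h))
    (he : ∀ i j, trF h (e i * e j) = if i = j then 1 else 0) :
    Set.BijOn
      (fun C : Submodule (ZMod 2) ((Fin n → GaloisField 2 h) × (Fin n → GaloisField 2 h)) =>
        Submodule.map (phi h n e).toLinearMap C)
      {C | (∀ v ∈ C, ∀ w ∈ C, trSymp h n v w = 0) ∧ Nat.card C = 2 ^ (h * (n - k))}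
      {C' | (∀ v ∈ C', ∀ w ∈ C', binSymp h n v w = 0) ∧ Nat.card C' = 2 ^ (h * (n - k))} :=
  stmt_6_general h n k e he
end

section
/- Let ℓ₁,…,ℓ_h be h projective lines in PG(2h-1,2) that together span PG(2h-1,2). Then there is a unique symplectic polarity ⊥ on PG(2h-1,2) such that ℓ_i^⊥ = ⟨ℓ_j : j ≠ i⟩ for all i = 1,…,h. -/
/-!
Pick a basis `b (i, 0), b (i, 1)` of each line `ℓ i`. As the lines span a space of dimension
`2h`, these `2h` vectors form a basis of the whole space. The condition `ℓᵢ^⊥ = ⟨ℓⱼ : j ≠ i⟩`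
makes distinct lines orthogonal, and an alternating form vanishes on each basis vector; since
the form is nondegenerate, `b (i, 0)` cannot also be orthogonal to `b (i, 1)`, so over `𝔽₂`
their pairing is `1`. Hence the Gram matrix is forced to be the standard hyperbolic one, and
conversely the hyperbolic form has all the required properties.
-/

abbrev F2 := ZMod 2

/-- The perpendicular subspace of `W` with respect to a bilinear form `f`. -/
def sperp {V : Type*} [AddCommGroup V] [Module F2 V]
    (f : V →ₗ[F2] V →ₗ[F2] F2) (W : Submodule F2 V) : Submodule F2 V where
  carrier := {v | ∀ w ∈ W, f v w = 0}
  add_mem' := by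
    intro a b ha hb w hw
    simp [map_add, LinearMap.add_apply, ha w hw, hb w hw]
  zero_mem' := by intro w hw; simp
  smul_mem' := by
    intro c v hv w hw
    simp [map_smul, LinearMap.smul_apply, hv w hw]

/-- A subspace is totally isotropic for `f` if `f` vanishes on it. -/
def TotIso {V : Type*} [AddCommGroup V] [Module F2 V]
    (f : V →ₗ[F2] V →ₗ[F2] F2) (W : Submodule F2 V) : Prop :=
  ∀ v ∈ W, ∀ w ∈ W, f v w = 0

/-- `f` is a nondegenerate alternating (symplectic) bilinear form. -/
def IsSymplectic {V : Type*} [AddCommGroup V] [Module F2 V]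
    (f : V →ₗ[F2] V →ₗ[F2] F2) : Prop :=
  (∀ v, f v v = 0) ∧ ∀ v, (∀ w, f v w = 0) → v = 0

open Module Submodule

theorem exists_basis_span_image_fst_eq {K V ι : Type*} [Field K] [AddCommGroup V] [Module K V]
    [FiniteDimensional K V] [Fintype ι] (ℓ : ι → Submodule K V)
    (hdim : ∀ i, finrank K (ℓ i) = 2) (hspan : ⨆ i, ℓ i = ⊤)
    (hV : finrank K V = 2 * Fintype.card ι) :
    ∃ b : Basis (ι × Fin 2) K V, ∀ i, ℓ i = span K (b '' (Prod.fst ⁻¹' {i})) := by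
  let v : ι × Fin 2 → V := fun p => (finBasisOfFinrankEq K (ℓ p.1) (hdim p.1) p.2 : V)
  have hv : ∀ i, span K (v '' (Prod.fst ⁻¹' {i})) = ℓ i := by
    intro i
    have hrange : v '' (Prod.fst ⁻¹' {i}) =
        (ℓ i).subtype '' Set.range (finBasisOfFinrankEq K (ℓ i) (hdim i)) := by
      ext; simp [v, Prod.exists]
    rw [hrange, ← Submodule.map_span, Basis.span_eq, map_subtype_top]
  have hv_top : ⊤ ≤ span K (Set.range v) := by
    have hunion : Set.range v = ⋃ i, v '' (Prod.fst ⁻¹' {i}) := by ext; simp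
    rw [← hspan, hunion, span_iUnion]
    simp only [hv, le_rfl]
  refine ⟨basisOfTopLeSpanOfCardEqFinrank v hv_top (by simp [hV, mul_comm]), fun i => ?_⟩
  rw [coe_basisOfTopLeSpanOfCardEqFinrank, hv]

section AdaptedBasis

variable {R V ι : Type*} [Semiring R] [AddCommMonoid V] [Module R V]
  {ℓ : ι → Submodule R V} {b : Basis (ι × Fin 2) R V}

theorem mem_of_span_image_fst_eq (hb : ∀ i, ℓ i = span R (b '' (Prod.fst ⁻¹' {i})))
    (p : ι × Fin 2) : b p ∈ ℓ p.1 := by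
  rw [hb]
  exact subset_span (Set.mem_image_of_mem b rfl)

theorem iSup_eq_span_image_fst (hb : ∀ i, ℓ i = span R (b '' (Prod.fst ⁻¹' {i})))
    (s : Set ι) : ⨆ j ∈ s, ℓ j = span R (b '' (Prod.fst ⁻¹' s)) := by
  simp only [hb, ← span_iUnion₂, ← Set.image_iUnion₂, ← Set.preimage_iUnion₂,
    Set.biUnion_of_singleton]

end AdaptedBasis

theorem mem_sperp_span_iff {V : Type*} [AddCommGroup V] [Module F2 V]
    (f : V →ₗ[F2] V →ₗ[F2] F2) (S : Set V) (x : V) :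
    x ∈ sperp f (span F2 S) ↔ ∀ w ∈ S, f x w = 0 := by
  change span F2 S ≤ LinearMap.ker (f x) ↔ _
  rw [span_le]
  rfl

section HyperbolicForm

variable {V ι : Type*} [AddCommGroup V] [Module F2 V]

def partner (p : ι × Fin 2) : ι × Fin 2 := (p.1, p.2 + 1)

@[simp]
theorem partner_partner (p : ι × Fin 2) : partner (partner p) = p := by
  have : ∀ k : Fin 2, k + 1 + 1 = k := by decide
  simp [partner, this]

theorem eq_or_eq_partner_of_fst_eq {p q : ι × Fin 2} (h : p.1 = q.1) :
    p = q ∨ p = partner q := by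
  obtain ⟨i, k⟩ := p
  obtain ⟨j, l⟩ := q
  obtain rfl : i = j := h
  fin_cases k <;> fin_cases l <;> simp [partner]

variable [Fintype ι] [DecidableEq ι]

noncomputable def hyperbolicForm (b : Basis (ι × Fin 2) F2 V) : V →ₗ[F2] V →ₗ[F2] F2 :=
  Matrix.toLinearMap₂ b b (Matrix.of fun p q => if p = partner q then 1 else 0)

variable (b : Basis (ι × Fin 2) F2 V)

theorem hyperbolicForm_apply_basis (p q : ι × Fin 2) :
    hyperbolicForm b (b p) (b q) = if p = partner q then 1 else 0 :=
  Matrix.toLinearMap₂_apply_basis ..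

theorem hyperbolicForm_apply_basis_right (x : V) (q : ι × Fin 2) :
    hyperbolicForm b x (b q) = b.repr x (partner q) := by
  conv_lhs => rw [← b.sum_repr x]
  simp only [map_sum, map_smul, LinearMap.sum_apply, LinearMap.smul_apply,
    hyperbolicForm_apply_basis, smul_eq_mul, mul_ite, mul_one, mul_zero]
  rw [Finset.sum_ite_eq' Finset.univ, if_pos (Finset.mem_univ _)]

theorem hyperbolicForm_self (x : V) : hyperbolicForm b x x = 0 := by
  nth_rw 2 [← b.sum_repr x]
  rw [map_sum]
  simp only [map_smul, hyperbolicForm_apply_basis_right, smul_eq_mul,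
    Fintype.sum_prod_type, Fin.sum_univ_two, partner, Fin.reduceAdd]
  exact Finset.sum_eq_zero fun i _ => by rw [mul_comm]; exact CharTwo.add_self_eq_zero _

theorem isSymplectic_hyperbolicForm : IsSymplectic (hyperbolicForm b) := by
  refine ⟨hyperbolicForm_self b, fun x hx => b.repr.map_eq_zero_iff.mp ?_⟩
  ext p
  simpa [hyperbolicForm_apply_basis_right] using hx (b (partner p))

theorem sperp_hyperbolicForm_span_image (s : Set (ι × Fin 2)) :
    sperp (hyperbolicForm b) (span F2 (b '' s)) = span F2 (b '' (partner ⁻¹' s)ᶜ) := by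
  ext x
  rw [mem_sperp_span_iff, Set.forall_mem_image, b.mem_span_image]
  simp only [hyperbolicForm_apply_basis_right]
  constructor
  · intro hx p hp hps
    exact Finsupp.mem_support_iff.mp hp (by simpa using hx hps)
  · intro hx q hq
    by_contra hne
    exact hx (Finsupp.mem_support_iff.mpr hne) (by simpa using hq)

theorem sperp_hyperbolicForm_iSup {ℓ : ι → Submodule F2 V}
    (hb : ∀ i, ℓ i = span F2 (b '' (Prod.fst ⁻¹' {i}))) (s : Set ι) :
    sperp (hyperbolicForm b) (⨆ j ∈ s, ℓ j) = ⨆ j ∈ sᶜ, ℓ j := by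
  rw [iSup_eq_span_image_fst hb, iSup_eq_span_image_fst hb, sperp_hyperbolicForm_span_image]
  -- `partner` preserves the first coordinate
  rfl

theorem eq_hyperbolicForm {g : V →ₗ[F2] V →ₗ[F2] F2} (hg : IsSymplectic g)
    (horth : ∀ p q, p.1 ≠ q.1 → g (b p) (b q) = 0) : g = hyperbolicForm b := by
  have hpartner : ∀ p, g (b p) (b (partner p)) = 1 := by
    intro p
    -- otherwise `b p` is orthogonal to every basis vector, i.e. lies in the radical of `g`
    refine Fin.eq_one_of_ne_zero _ fun h0 => b.ne_zero p (hg.2 _ fun w => ?_)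
    suffices g (b p) = 0 by rw [this, LinearMap.zero_apply]
    refine b.ext fun r => ?_
    by_cases hr : r.1 = p.1
    · obtain rfl | rfl := eq_or_eq_partner_of_fst_eq hr
      exacts [hg.1 _, h0]
    · exact horth p r (Ne.symm hr)
  refine LinearMap.ext_basis b b fun p q => ?_
  rw [hyperbolicForm_apply_basis]
  split_ifs with hpq
  · obtain rfl : q = partner p := by rw [hpq, partner_partner]
    exact hpartner p
  · by_cases hfst : p.1 = q.1
    · obtain rfl := (eq_or_eq_partner_of_fst_eq hfst).resolve_right hpq
      exact hg.1 _
    · exact horth p q hfst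

end HyperbolicForm

theorem stmt_7_general (h : ℕ)
    (ℓ : Fin h → Submodule F2 (Fin (2 * h) → F2))
    (hdim : ∀ i, Module.finrank F2 (ℓ i) = 2)
    (hspan : ⨆ i, ℓ i = ⊤) :
    ∃! f : (Fin (2 * h) → F2) →ₗ[F2] (Fin (2 * h) → F2) →ₗ[F2] F2,
      IsSymplectic f ∧ ∀ i, sperp f (ℓ i) = ⨆ j ∈ ({j | j ≠ i} : Set (Fin h)), ℓ j := by
  obtain ⟨b, hb⟩ := exists_basis_span_image_fst_eq ℓ hdim hspan (by simp)
  refine ⟨hyperbolicForm b, ⟨isSymplectic_hyperbolicForm b, fun i => ?_⟩, ?_⟩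
  · simpa using sperp_hyperbolicForm_iSup b hb {i}
  rintro g ⟨hg, hperp⟩
  refine eq_hyperbolicForm b hg fun p q hpq => ?_
  have hp : b p ∈ sperp g (ℓ q.1) := by
    rw [hperp]
    exact mem_iSup_of_mem p.1 (mem_iSup_of_mem hpq (mem_of_span_image_fst_eq hb p))
  exact hp _ (mem_of_span_image_fst_eq hb q)

/-- Given `h` lines (2-dimensional subspaces) of `𝔽₂^{2h}` that together span the
whole space, there is a unique symplectic polarity (nondegenerate alternating form)
such that `ℓᵢ^⊥ = ⟨ℓⱼ : j ≠ i⟩` for all `i`. -/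
theorem stmt_7 (h : ℕ) (hh : 1 ≤ h)
    (ℓ : Fin h → Submodule F2 (Fin (2 * h) → F2))
    (hdim : ∀ i, Module.finrank F2 (ℓ i) = 2)
    (hspan : ⨆ i, ℓ i = ⊤) :
    ∃! f : (Fin (2 * h) → F2) →ₗ[F2] (Fin (2 * h) → F2) →ₗ[F2] F2,
      IsSymplectic f ∧ ∀ i, sperp f (ℓ i) = ⨆ j ∈ ({j | j ≠ i} : Set (Fin h)), ℓ j :=
  stmt_7_general h ℓ hdim hspan
end

section
/- If an [[n,k,d]]_q stabiliser code satisfies k = n - 2d + 2 (meets the quantum Singleton bound with equality), then the minimum nonzero symplectic weight of the associated self-orthogonal code C = τ(S) is n - d + 2; in particular the code is pure. -/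
attribute [local instance] Classical.propDecidable

/-- The symplectic weight of `(a|b)`: the number of positions `i` with
`(aᵢ, bᵢ) ≠ (0,0)`. -/
noncomputable def swt (h n : ℕ)
    (v : (Fin n → GaloisField 2 h) × (Fin n → GaloisField 2 h)) : ℕ :=
  (Finset.univ.filter fun i => ¬(v.1 i = 0 ∧ v.2 i = 0)).card

/-- The trace-symplectic dual of an additive code `C`. -/
noncomputable def trDual (h n : ℕ)
    (C : Submodule (ZMod 2) ((Fin n → GaloisField 2 h) × (Fin n → GaloisField 2 h))) :
    Set ((Fin n → GaloisField 2 h) × (Fin n → GaloisField 2 h)) :=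
  {v | ∀ w ∈ C, trSymp h n v w = 0}

/-!
Write `r = d - 1` and `s = n - d + 1`, so that `r + s = n`, `dim C = 2hr`, and `r < s` once
`k > 0`. For a set `B` of `s` coordinates, a vector of `Cᗮ` supported on `Bᶜ` has weight at most
`r < d`, hence lies in `C`; a dimension count with the nondegenerate trace-symplectic form then
shows that `C` has as many codewords supported on `B` as on `Bᶜ`. Summing over all `B`, each
codeword `v` is counted once for every `s`-set and once for every `r`-set containing its
support, and the `s`-sets win strictly when `0 < wt v ≤ s`, so no such codeword exists.
Conversely any `n - d + 2` coordinates support a nonzero codeword, because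
`dim C + 2h(n - d + 2) > 2hn`. For `k = 0` the lower bound `d = n - d + 2` comes from `C ⊆ Cᗮ`.
-/

open Module Finset

theorem Nat.choose_lt_choose_of_lt_of_add_lt {m a b : ℕ} (hab : a < b) (hm : a + b < m) :
    m.choose a < m.choose b := by
  have hstep : ∀ j, 2 * j + 1 < m → m.choose j < m.choose (j + 1) := fun j hj =>
    Nat.lt_of_mul_lt_mul_right <| by
      rw [← Nat.choose_succ_right_eq]
      exact Nat.mul_lt_mul_of_pos_left (by omega) (Nat.choose_pos (by omega))
  have hmono : ∀ b, a < b → 2 * b ≤ m → m.choose a < m.choose b := by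
    intro b hab
    induction b, hab using Nat.le_induction with
    | base => exact fun hb => hstep a (by omega)
    | succ b hb ih => exact fun hb' => (ih (by omega)).trans (hstep b (by omega))
  rcases le_or_gt (2 * b) m with hb | hb
  · exact hmono b hab hb
  · rw [← Nat.choose_symm (by omega : b ≤ m)]
    exact hmono (m - b) (by omega) (by omega)

namespace Finset

variable {ι β : Type*} [Fintype ι] [DecidableEq ι]

theorem sum_powersetCard_compl {M : Type*} [AddCommMonoid M] (f : Finset ι → M) {r s : ℕ}
    (hcard : r + s = Fintype.card ι) :
    ∑ B ∈ powersetCard s univ, f Bᶜ = ∑ S ∈ powersetCard r univ, f S := by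
  refine sum_nbij' compl compl (fun B hB => ?_) (fun S hS => ?_) (fun B _ => compl_compl B)
    (fun S _ => compl_compl S) (fun B _ => rfl)
  · simp only [mem_powersetCard_univ, card_compl] at hB ⊢
    omega
  · simp only [mem_powersetCard_univ, card_compl] at hS ⊢
    omega

theorem card_filter_powersetCard_subset_lt {r s : ℕ} (hrs : r < s) (hcard : r + s = Fintype.card ι)
    {A : Finset ι} (hA : A.Nonempty) (hAs : #A ≤ s) :
    #{B ∈ powersetCard r univ | A ⊆ B} < #{B ∈ powersetCard s univ | A ⊆ B} := by
  rw [card_filter_powersetCard_subset A univ s (subset_univ A) hAs, card_univ]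
  have hA0 := hA.card_pos
  rcases le_or_gt #A r with hAr | hAr
  · rw [card_filter_powersetCard_subset A univ r (subset_univ A) hAr, card_univ]
    exact Nat.choose_lt_choose_of_lt_of_add_lt (by omega) (by omega)
  · rw [card_eq_zero.mpr (filter_eq_empty_iff.mpr fun B hB hAB => ?_)]
    · exact Nat.choose_pos (by omega)
    · have := card_le_card hAB
      rw [mem_powersetCard_univ] at hB
      omega

theorem card_filter_powersetCard_subset_le {r s : ℕ} (hrs : r ≤ s) (hcard : r + s = Fintype.card ι)
    (A : Finset ι) :
    #{B ∈ powersetCard r univ | A ⊆ B} ≤ #{B ∈ powersetCard s univ | A ⊆ B} := by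
  rcases eq_or_lt_of_le hrs with rfl | hrs
  · exact le_rfl
  rcases A.eq_empty_or_nonempty with rfl | hA
  · simp only [empty_subset, filter_true, card_powersetCard, card_univ]
    rw [← hcard, Nat.choose_symm_add]
  rcases le_or_gt #A s with hAs | hAs
  · exact (card_filter_powersetCard_subset_lt hrs hcard hA hAs).le
  · rw [card_eq_zero.mpr (filter_eq_empty_iff.mpr fun B hB hAB => ?_)]
    · exact Nat.zero_le _
    · have := card_le_card hAB
      rw [mem_powersetCard_univ] at hB
      omega

theorem sum_card_filter_subset (X : Finset β) (supp : β → Finset ι) (r : ℕ) :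
    ∑ B ∈ powersetCard r univ, #{v ∈ X | supp v ⊆ B} =
      ∑ v ∈ X, #{B ∈ powersetCard r univ | supp v ⊆ B} := by
  simp only [card_filter]
  exact sum_comm

/-- Double counting pairs `(v, B)` with `supp v ⊆ B` against pairs with `supp v ⊆ Bᶜ`: a
nonempty support of size at most `s` lies in strictly more `s`-sets than `r`-sets. -/
theorem support_eq_empty_or_lt_card (X : Finset β) (supp : β → Finset ι) {r s : ℕ}
    (hrs : r < s) (hcard : r + s = Fintype.card ι)
    (hX : ∀ B : Finset ι, #B = s → #{v ∈ X | supp v ⊆ B} = #{v ∈ X | supp v ⊆ Bᶜ}) :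
    ∀ v ∈ X, supp v = ∅ ∨ s < #(supp v) := by
  by_contra! ⟨v₀, hv₀X, hv₀, hv₀s⟩
  have hsum : ∑ v ∈ X, #{B ∈ powersetCard s univ | supp v ⊆ B} =
      ∑ v ∈ X, #{B ∈ powersetCard r univ | supp v ⊆ B} := by
    rw [← sum_card_filter_subset, ← sum_card_filter_subset,
      ← sum_powersetCard_compl (fun B => #{v ∈ X | supp v ⊆ B}) hcard]
    exact sum_congr rfl fun B hB => hX B (mem_powersetCard_univ.mp hB)
  refine (sum_lt_sum (fun v _ => card_filter_powersetCard_subset_le hrs.le hcard (supp v))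
    ⟨v₀, hv₀X, ?_⟩).ne' hsum
  exact card_filter_powersetCard_subset_lt hrs hcard hv₀ hv₀s

end Finset

namespace LinearMap.BilinForm

variable {K V : Type*} [Field K] [AddCommGroup V] [Module K V] {B : LinearMap.BilinForm K V}

theorem orthogonal_sup (N L : Submodule K V) :
    B.orthogonal (N ⊔ L) = B.orthogonal N ⊓ B.orthogonal L := by
  refine le_antisymm (le_inf (orthogonal_le le_sup_left) (orthogonal_le le_sup_right)) ?_
  rintro v ⟨hvN, hvL⟩ w hw
  obtain ⟨x, hx, y, hy, rfl⟩ := Submodule.mem_sup.mp hw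
  have hxv : B x v = 0 := hvN x hx
  have hyv : B y v = 0 := hvL y hy
  simp [hxv, hyv]

variable [FiniteDimensional K V]

theorem finrank_inf_orthogonal_add_finrank (hB : B.Nondegenerate) (b : B.IsRefl)
    {C W : Submodule K V} (hCW : B.orthogonal C ⊓ W = C ⊓ W) :
    finrank K ↥(C ⊓ B.orthogonal W) + finrank K W = finrank K C + finrank K ↥(C ⊓ W) := by
  have hperp : B.orthogonal (B.orthogonal C ⊔ W) = C ⊓ B.orthogonal W := by
    rw [orthogonal_sup, orthogonal_orthogonal hB b]
  have h₁ := finrank_orthogonal hB (B.orthogonal C ⊔ W)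
  have h₂ := Submodule.finrank_sup_add_finrank_inf_eq (B.orthogonal C) W
  have h₃ := finrank_orthogonal hB C
  have h₄ := Submodule.finrank_le (B.orthogonal C ⊔ W)
  have h₅ := Submodule.finrank_le C
  rw [hperp] at h₁
  rw [hCW] at h₂
  omega

end LinearMap.BilinForm

namespace SymplecticCode

variable {h n : ℕ}

local notation "V" => (Fin n → GaloisField 2 h) × (Fin n → GaloisField 2 h)

noncomputable def trSympForm (h n : ℕ) :
    LinearMap.BilinForm (ZMod 2) ((Fin n → GaloisField 2 h) × (Fin n → GaloisField 2 h)) :=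
  LinearMap.mk₂ (ZMod 2) (trSymp h n)
    (fun v v' w => by simp only [trSymp, trF, ← sum_add_distrib, ← map_add]; congr! 2; simp; ring)
    (fun c v w => by simp only [trSymp, trF, smul_sum, ← map_smul]; congr! 2; simp)
    (fun v w w' => by simp only [trSymp, trF, ← sum_add_distrib, ← map_add]; congr! 2; simp; ring)
    (fun c v w => by simp only [trSymp, trF, smul_sum, ← map_smul]; congr! 2; simp)

@[simp] lemma trSympForm_apply (v w : V) : trSympForm h n v w = trSymp h n v w := rfl

lemma trSymp_comm (v w : V) : trSymp h n v w = trSymp h n w v := by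
  simp only [trSymp, add_comm]

lemma trSympForm_isRefl : (trSympForm h n).IsRefl := fun v w hvw => by
  rwa [trSympForm_apply, trSymp_comm]

lemma mem_orthogonal_iff_mem_trDual {C : Submodule (ZMod 2) V} {v : V} :
    v ∈ (trSympForm h n).orthogonal C ↔ v ∈ trDual h n C :=
  forall₂_congr fun w _ => by rw [trSympForm_apply, trSymp_comm]

noncomputable def support (v : V) : Finset (Fin n) := {i | ¬(v.1 i = 0 ∧ v.2 i = 0)}

lemma swt_eq_card_support (v : V) : swt h n v = #(support v) := rfl

lemma support_eq_empty_iff {v : V} : support v = ∅ ↔ v = 0 := by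
  simp [support, filter_eq_empty_iff, Prod.ext_iff, funext_iff, forall_and]

noncomputable def restrictToCompl (B : Finset (Fin n)) :
    V →ₗ[ZMod 2] (↥(Bᶜ) → GaloisField 2 h) × (↥(Bᶜ) → GaloisField 2 h) :=
  (LinearMap.funLeft _ _ Subtype.val).prodMap (LinearMap.funLeft _ _ Subtype.val)

noncomputable def supportedOn (h : ℕ) {n : ℕ} (B : Finset (Fin n)) :
    Submodule (ZMod 2) ((Fin n → GaloisField 2 h) × (Fin n → GaloisField 2 h)) :=
  LinearMap.ker (restrictToCompl B)

lemma mem_supportedOn_iff {B : Finset (Fin n)} {v : V} :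
    v ∈ supportedOn h B ↔ ∀ i ∉ B, v.1 i = 0 ∧ v.2 i = 0 := by
  simp [supportedOn, restrictToCompl, LinearMap.funLeft, funext_iff, forall_and]

lemma mem_supportedOn_iff_support_subset {B : Finset (Fin n)} {v : V} :
    v ∈ supportedOn h B ↔ support v ⊆ B := by
  simp only [mem_supportedOn_iff, support, subset_iff, mem_filter_univ]
  exact ⟨fun hv i hi => by_contra fun hiB => hi (hv i hiB),
    fun hv i hiB => by_contra fun hi => hiB (hv hi)⟩

lemma finrank_supportedOn (hh : h ≠ 0) (B : Finset (Fin n)) :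
    finrank (ZMod 2) (supportedOn h B) = 2 * (#B * h) := by
  have hres : Function.Surjective (LinearMap.funLeft (ZMod 2) (GaloisField 2 h)
      (Subtype.val : ↥(Bᶜ) → Fin n)) :=
    LinearMap.funLeft_surjective_of_injective _ _ _ Subtype.val_injective
  have hsurj : Function.Surjective (restrictToCompl (h := h) B) :=
    Prod.map_surjective.mpr ⟨hres, hres⟩
  have hrank := LinearMap.finrank_range_add_finrank_ker (restrictToCompl (h := h) B)
  rw [LinearMap.range_eq_top.mpr hsurj, finrank_top] at hrank
  simp only [finrank_prod, finrank_pi_fintype, GaloisField.finrank 2 hh, sum_const, card_univ,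
    Fintype.card_coe, card_compl, Fintype.card_fin, smul_eq_mul] at hrank
  have hsplit : (n - #B) * h + #B * h = n * h := by
    rw [← add_mul, Nat.sub_add_cancel (card_le_univ B |>.trans_eq (Fintype.card_fin n))]
  rw [supportedOn]
  linarith

lemma eq_zero_of_forall_trF_mul_eq_zero {a : GaloisField 2 h} (ha : ∀ c, trF h (a * c) = 0) :
    a = 0 :=
  (traceForm_nondegenerate (ZMod 2) (GaloisField 2 h)).1 a (by simpa [trF] using ha)

lemma trSymp_single_snd (v : V) (i : Fin n) (c : GaloisField 2 h) :
    trSymp h n v (0, Pi.single i c) = trF h (v.1 i * c) := by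
  simp [trSymp, Pi.single_apply, trF, apply_ite]

lemma trSymp_single_fst (v : V) (i : Fin n) (c : GaloisField 2 h) :
    trSymp h n v (Pi.single i c, 0) = trF h (v.2 i * c) := by
  simp [trSymp, Pi.single_apply, trF, apply_ite, mul_comm]

lemma orthogonal_supportedOn (B : Finset (Fin n)) :
    (trSympForm h n).orthogonal (supportedOn h B) = supportedOn h Bᶜ := by
  have single_mem : ∀ i ∈ B, ∀ c : GaloisField 2 h,
      ((0, Pi.single i c) : V) ∈ supportedOn h B ∧ ((Pi.single i c, 0) : V) ∈ supportedOn h B :=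
    fun i hi c => by
      have hne : ∀ j ∉ B, j ≠ i := fun j hj e => hj (e ▸ hi)
      simp only [mem_supportedOn_iff]
      exact ⟨fun j hj => by simp [hne j hj], fun j hj => by simp [hne j hj]⟩
  ext v
  rw [mem_orthogonal_iff_mem_trDual, mem_supportedOn_iff]
  constructor
  · intro hv i hi
    rw [notMem_compl] at hi
    exact ⟨eq_zero_of_forall_trF_mul_eq_zero fun c =>
        trSymp_single_snd v i c ▸ hv _ (single_mem i hi c).1,
      eq_zero_of_forall_trF_mul_eq_zero fun c =>
        trSymp_single_fst v i c ▸ hv _ (single_mem i hi c).2⟩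
  · intro hv w hw
    rw [mem_supportedOn_iff] at hw
    refine sum_eq_zero fun i _ => ?_
    by_cases hi : i ∈ B
    · simp [(hv i (notMem_compl.mpr hi)).1, (hv i (notMem_compl.mpr hi)).2, trF]
    · simp [(hw i hi).1, (hw i hi).2, trF]

lemma trSympForm_nondegenerate : (trSympForm h n).Nondegenerate := by
  have hsep : ∀ v : V, (∀ w, trSymp h n v w = 0) → v = 0 := fun v hv => by
    have hv' : v ∈ supportedOn h (univ : Finset (Fin n))ᶜ := by
      rw [← orthogonal_supportedOn, mem_orthogonal_iff_mem_trDual]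
      exact fun w _ => hv w
    rwa [compl_univ, mem_supportedOn_iff_support_subset, subset_empty, support_eq_empty_iff] at hv'
  exact ⟨fun v hv => hsep v hv, fun v hv => hsep v fun w => trSymp_comm v w ▸ hv w⟩

lemma card_filter_support_subset (C : Submodule (ZMod 2) V) (B : Finset (Fin n)) :
    #{v ∈ univ.filter (· ∈ C) | support v ⊆ B} =
      2 ^ finrank (ZMod 2) ↥(C ⊓ supportedOn h B) := by
  have hcard :
      Fintype.card ↥(C ⊓ supportedOn h B) = #{v ∈ univ.filter (· ∈ C) | support v ⊆ B} := by
    rw [filter_filter, ← Fintype.card_subtype]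
    exact Fintype.card_congr <| Equiv.subtypeEquivRight fun v => by
      rw [Submodule.mem_inf, mem_supportedOn_iff_support_subset]
  rw [← hcard, Module.card_eq_pow_finrank (K := ZMod 2), ZMod.card]

lemma finrank_inf_supportedOn_compl (hh : h ≠ 0) {C : Submodule (ZMod 2) V}
    (hself : ∀ v ∈ C, ∀ w ∈ C, trSymp h n v w = 0) {B : Finset (Fin n)}
    (hC : finrank (ZMod 2) C = 2 * (#B * h))
    (hB : ∀ v ∈ trDual h n C, support v ⊆ B → v ∈ C) :
    finrank (ZMod 2) ↥(C ⊓ supportedOn h Bᶜ) = finrank (ZMod 2) ↥(C ⊓ supportedOn h B) := by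
  have hCW : (trSympForm h n).orthogonal C ⊓ supportedOn h B = C ⊓ supportedOn h B := by
    refine le_antisymm (fun v hv => ?_) (inf_le_inf_right _ fun v hv => ?_)
    · exact ⟨hB v (mem_orthogonal_iff_mem_trDual.mp hv.1)
        (mem_supportedOn_iff_support_subset.mp hv.2), hv.2⟩
    · exact mem_orthogonal_iff_mem_trDual.mpr fun w hw => hself v hv w hw
  have := LinearMap.BilinForm.finrank_inf_orthogonal_add_finrank trSympForm_nondegenerate
    trSympForm_isRefl hCW
  rw [orthogonal_supportedOn, finrank_supportedOn hh, hC] at this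
  omega

lemma lt_swt_of_mem (hh : h ≠ 0) {C : Submodule (ZMod 2) V}
    (hself : ∀ v ∈ C, ∀ w ∈ C, trSymp h n v w = 0) {r s : ℕ} (hrs : r < s) (hn : r + s = n)
    (hC : finrank (ZMod 2) C = 2 * (r * h))
    (hdual : ∀ v ∈ trDual h n C, swt h n v ≤ r → v ∈ C) :
    ∀ v ∈ C, v ≠ 0 → s < swt h n v := by
  intro v hvC hv
  have hbalanced : ∀ B : Finset (Fin n), #B = s →
      #{w ∈ univ.filter (· ∈ C) | support w ⊆ B} =
        #{w ∈ univ.filter (· ∈ C) | support w ⊆ Bᶜ} := by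
    intro B hB
    have hBc : #Bᶜ = r := by rw [card_compl, Fintype.card_fin]; omega
    have hdualBc : ∀ w ∈ trDual h n C, support w ⊆ Bᶜ → w ∈ C := fun w hw hwB =>
      hdual w hw ((swt_eq_card_support w).trans_le ((card_le_card hwB).trans hBc.le))
    have hrank := finrank_inf_supportedOn_compl hh hself (by rw [hC, hBc]) hdualBc
    rw [compl_compl] at hrank
    rw [card_filter_support_subset, card_filter_support_subset, hrank]
  have hsupp := support_eq_empty_or_lt_card _ support hrs (by simpa using hn) hbalanced v
    (mem_filter.mpr ⟨mem_univ v, hvC⟩)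
  rw [swt_eq_card_support]
  exact hsupp.resolve_left (support_eq_empty_iff.not.mpr hv)

lemma exists_ne_zero_swt_le (hh : h ≠ 0) {C : Submodule (ZMod 2) V} {m : ℕ} (hm : m ≤ n)
    (hC : 2 * ((n - m) * h) < finrank (ZMod 2) C) :
    ∃ v ∈ C, v ≠ 0 ∧ swt h n v ≤ m := by
  obtain ⟨T, -, hT⟩ := exists_subset_card_eq (s := (univ : Finset (Fin n))) (n := m)
    (by simpa using hm)
  have hdim := Submodule.finrank_sup_add_finrank_inf_eq C (supportedOn h T)
  have hle := Submodule.finrank_le (C ⊔ supportedOn h T)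
  rw [finrank_supportedOn hh, hT] at hdim
  simp only [finrank_prod, finrank_pi_fintype, GaloisField.finrank 2 hh, sum_const, card_univ,
    Fintype.card_fin, smul_eq_mul] at hle
  have hsplit : (n - m) * h + m * h = n * h := by rw [← add_mul, Nat.sub_add_cancel hm]
  have hne : C ⊓ supportedOn h T ≠ ⊥ := by
    rw [Ne, ← Submodule.finrank_eq_zero]
    omega
  obtain ⟨v, ⟨hvC, hvT⟩, hv⟩ := Submodule.exists_mem_ne_zero_of_ne_bot hne
  refine ⟨v, hvC, hv, ?_⟩
  rw [swt_eq_card_support, ← hT]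
  exact card_le_card (mem_supportedOn_iff_support_subset.mp hvT)

lemma finrank_eq_of_natCard_eq {C : Submodule (ZMod 2) V} {m : ℕ}
    (hcard : Nat.card C = (2 ^ h) ^ m) : finrank (ZMod 2) C = h * m := by
  rw [Nat.card_eq_fintype_card, Module.card_eq_pow_finrank (K := ZMod 2), ZMod.card, ← pow_mul]
    at hcard
  exact Nat.pow_right_injective le_rfl hcard

end SymplecticCode

theorem stmt_16_general (h n k d : ℕ) (hh : 1 ≤ h) (hd : 2 ≤ d)
    (C : Submodule (ZMod 2) ((Fin n → GaloisField 2 h) × (Fin n → GaloisField 2 h)))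
    (hself : ∀ v ∈ C, ∀ w ∈ C, trSymp h n v w = 0)
    (hcard : Nat.card C = (2 ^ h) ^ (n - k))
    (hdist0 : k = 0 →
      IsLeast {m | ∃ v ∈ trDual h n C, v ≠ 0 ∧ swt h n v = m} d)
    (hdist1 : k ≠ 0 →
      IsLeast {m | ∃ v ∈ trDual h n C, v ∉ C ∧ swt h n v = m} d)
    (hSingleton : n + 2 = k + 2 * d) :
    IsLeast {m | ∃ v ∈ C, v ≠ 0 ∧ swt h n v = m} (n + 2 - d) ∧
      ∀ v ∈ C, v ≠ 0 → d ≤ swt h n v := by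
  have hh₀ : h ≠ 0 := Nat.one_le_iff_ne_zero.mp hh
  have hC : Module.finrank (ZMod 2) C = 2 * ((d - 1) * h) := by
    rw [SymplecticCode.finrank_eq_of_natCard_eq hcard, show n - k = 2 * (d - 1) by omega]
    ring
  have hlow : ∀ v ∈ C, v ≠ 0 → n + 2 - d ≤ swt h n v := by
    intro v hv hv₀
    rcases eq_or_ne k 0 with hk | hk
    · have := (hdist0 hk).2 ⟨v, fun w hw => hself v hv w hw, hv₀, rfl⟩
      omega
    · have hdual : ∀ w ∈ trDual h n C, swt h n w ≤ d - 1 → w ∈ C := fun w hw hwd =>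
        by_contra fun hwC => absurd ((hdist1 hk).2 ⟨w, hw, hwC, rfl⟩) (by omega)
      have := SymplecticCode.lt_swt_of_mem hh₀ hself (s := n - d + 1) (by omega) (by omega) hC
        hdual v hv hv₀
      omega
  have hdim : 2 * ((n - (n + 2 - d)) * h) < Module.finrank (ZMod 2) C := by
    rw [hC, show n - (n + 2 - d) = d - 2 by omega]
    have := Nat.mul_lt_mul_of_pos_right (show d - 2 < d - 1 by omega) (by omega : 0 < h)
    omega
  obtain ⟨v, hvC, hv₀, hvw⟩ := SymplecticCode.exists_ne_zero_swt_le hh₀ (by omega) hdim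
  refine ⟨⟨⟨v, hvC, hv₀, le_antisymm hvw (hlow v hvC hv₀)⟩, ?_⟩, fun w hw hw₀ => ?_⟩
  · rintro m ⟨w, hw, hw₀, rfl⟩
    exact hlow w hw hw₀
  · have := hlow w hw hw₀
    omega

/-- If an `[[n,k,d]]_q` stabiliser code meets the quantum Singleton bound
`k = n - 2d + 2` with equality, then the minimum nonzero symplectic weight of the
associated self-orthogonal code `C = τ(S)` is `n - d + 2`; in particular the code
is pure. -/
theorem stmt_16 (h n k d : ℕ) (hh : 1 ≤ h) (hk : k ≤ n) (hd : 2 ≤ d)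
    (C : Submodule (ZMod 2) ((Fin n → GaloisField 2 h) × (Fin n → GaloisField 2 h)))
    (hself : ∀ v ∈ C, ∀ w ∈ C, trSymp h n v w = 0)
    (hcard : Nat.card C = (2 ^ h) ^ (n - k))
    (hdist0 : k = 0 →
      IsLeast {m | ∃ v ∈ trDual h n C, v ≠ 0 ∧ swt h n v = m} d)
    (hdist1 : k ≠ 0 →
      IsLeast {m | ∃ v ∈ trDual h n C, v ∉ C ∧ swt h n v = m} d)
    (hSingleton : n + 2 = k + 2 * d) :
    IsLeast {m | ∃ v ∈ C, v ≠ 0 ∧ swt h n v = m} (n + 2 - d) ∧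
      ∀ v ∈ C, v ≠ 0 → d ≤ swt h n v :=
  stmt_16_general h n k d hh hd C hself hcard hdist0 hdist1 hSingleton
end
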